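/- For s = σ + iτ complex with σ < 0 and s not an integer, |Γ_ℝ(1-s)/Γ_ℝ(s)| ≥ √2 · ((2π)^{σ-1/2}/√π) · Γ(1-σ) · |tanh(πτ/2)|, where Γ_ℝ(s) = π^{-s/2} Γ(s/2). -/

import Mathlib

open Real Complex

/-- `Γ_ℝ(s) = π^{-s/2} Γ(s/2)`. -/
noncomputable def GammaR (s : ℂ) : ℂ := (Real.pi : ℂ) ^ (-s / 2) * Complex.Gamma (s / 2)

/-- `Γ_ℂ(s) = 2 (2π)^{-s} Γ(s)`. -/
noncomputable def GammaC (s : ℂ) : ℂ := 2 * (2 * Real.pi : ℂ) ^ (-s) * Complex.Gamma s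

/-- `γ_ℝ(s) = |Γ_ℝ(1-s)/Γ_ℝ(s)|`. -/
noncomputable def gammaRFactor (s : ℂ) : ℝ := ‖GammaR (1 - s) / GammaR s‖

/-- `γ_ℂ(s) = |Γ_ℂ(1-s)/Γ_ℂ(s)|^{1/2}`. -/
noncomputable def gammaCFactor (s : ℂ) : ℝ := Real.sqrt (‖GammaC (1 - s) / GammaC s‖)

/-- `Γ_m(s) = min {γ_ℝ(s), γ_ℂ(s)}`. -/
noncomputable def GammaMin (s : ℂ) : ℝ := min (gammaRFactor s) (gammaCFactor s)

/-!
Write `s = σ + iτ`. Euler's reflection formula turns `1 / Γ(s/2)` into `Γ(1 - s/2) sin(πs/2) / π`,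
so `γ_ℝ(s) = π^{σ-3/2} |Γ((1-s)/2)| |Γ(1-s/2)| |sin(πs/2)|`. Both Gamma arguments have real part
at least `1/2` and imaginary part `-τ/2`, so each Gamma factor is at least its value at the real
part divided by `√cosh(πτ/2)`; this comes from comparing with the line `Re = 1/2`, where
`|Γ(1/2 + it)|² = π / cosh(πt)`, through Euler's product formula. Legendre's duplication formula
combines the two real Gamma values into `2^σ √π Γ(1 - σ)`, and `|sin(πs/2)| ≥ |sinh(πτ/2)|`
supplies the numerator of `tanh(πτ/2)`.
-/

open Filter Finset

lemma sqrt_sq_add_sq_mul_le {x y : ℝ} (t : ℝ) (hy : 0 ≤ y) (hyx : y ≤ x) :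
    √(x ^ 2 + t ^ 2) * y ≤ x * √(y ^ 2 + t ^ 2) :=
  calc √(x ^ 2 + t ^ 2) * y = √((x ^ 2 + t ^ 2) * y ^ 2) := by
        rw [Real.sqrt_mul (by positivity), Real.sqrt_sq hy]
    _ ≤ √(x ^ 2 * (y ^ 2 + t ^ 2)) := by
        have := mul_le_mul_of_nonneg_left (pow_le_pow_left₀ hy hyx 2) (sq_nonneg t)
        exact Real.sqrt_le_sqrt (by nlinarith)
    _ = x * √(y ^ 2 + t ^ 2) := by
        rw [Real.sqrt_mul' _ (by positivity), Real.sqrt_sq (hy.trans hyx)]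

lemma norm_GammaSeq_add_mul_I (x t : ℝ) {n : ℕ} (hn : n ≠ 0) :
    ‖Complex.GammaSeq (x + t * I) n‖ =
      (n : ℝ) ^ x * n.factorial / ∏ j ∈ range (n + 1), √((x + j) ^ 2 + t ^ 2) := by
  have hre : ∀ j : ℕ, (x : ℂ) + t * I + j = ((x + j : ℝ) : ℂ) + t * I := fun j ↦ by
    push_cast; ring
  rw [Complex.GammaSeq, norm_div, norm_mul, norm_prod, ← Complex.ofReal_natCast,
    Complex.norm_cpow_eq_rpow_re_of_pos (by positivity)]
  simp only [hre, Complex.norm_def, Complex.normSq_add_mul_I]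
  simp

lemma GammaSeq_mul_norm_GammaSeq_le {a b : ℝ} (t : ℝ) (hb : 0 < b) (hba : b ≤ a) {n : ℕ}
    (hn : n ≠ 0) :
    Real.GammaSeq a n * ‖Complex.GammaSeq (b + t * I) n‖ ≤
      ‖Complex.GammaSeq (a + t * I) n‖ * Real.GammaSeq b n := by
  have hpos : ∀ {x : ℝ}, 0 < x → ∀ j : ℕ, 0 < x + j := fun hx j ↦ by positivity
  rw [norm_GammaSeq_add_mul_I _ _ hn, norm_GammaSeq_add_mul_I _ _ hn, Real.GammaSeq,
    Real.GammaSeq, div_mul_div_comm, div_mul_div_comm]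
  refine div_le_div_of_nonneg_left (by positivity) ?_ ?_
  · exact mul_pos (prod_pos fun j _ ↦ by have := hpos (hb.trans_le hba) j; positivity)
      (prod_pos fun j _ ↦ hpos hb j)
  · rw [← prod_mul_distrib, ← prod_mul_distrib]
    exact prod_le_prod (fun j _ ↦ by have := hpos hb j; positivity)
      fun j _ ↦ sqrt_sq_add_sq_mul_le t (hpos hb j).le (by linarith)

lemma Gamma_mul_norm_Gamma_le {a b : ℝ} (t : ℝ) (hb : 0 < b) (hba : b ≤ a) :
    Real.Gamma a * ‖Complex.Gamma (b + t * I)‖ ≤ ‖Complex.Gamma (a + t * I)‖ * Real.Gamma b := by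
  refine le_of_tendsto_of_tendsto
    ((Real.GammaSeq_tendsto_Gamma a).mul (Complex.GammaSeq_tendsto_Gamma _).norm)
    ((Complex.GammaSeq_tendsto_Gamma _).norm.mul (Real.GammaSeq_tendsto_Gamma b)) ?_
  filter_upwards [eventually_ne_atTop 0] with n hn
  exact GammaSeq_mul_norm_GammaSeq_le t hb hba hn

lemma norm_Gamma_one_half_add_mul_I (t : ℝ) :
    ‖Complex.Gamma (1 / 2 + t * I)‖ = √(π / Real.cosh (π * t)) := by
  have hconj : 1 - (1 / 2 + t * I) = starRingEnd ℂ (1 / 2 + t * I) := by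
    apply Complex.ext <;> norm_num
  have hsin : Complex.sin (π * (1 / 2 + t * I)) = Real.cosh (π * t) := by
    rw [mul_add, Complex.sin_add, show (π : ℂ) * (t * I) = (π * t : ℝ) * I by push_cast; ring,
      Complex.cos_mul_I, Complex.sin_mul_I, show (π : ℂ) * (1 / 2) = π / 2 by ring,
      Complex.sin_pi_div_two, Complex.cos_pi_div_two, Complex.ofReal_cosh]
    ring
  have h := Complex.Gamma_mul_Gamma_one_sub (1 / 2 + t * I)
  rw [hconj, Complex.Gamma_conj, Complex.mul_conj, hsin, ← Complex.ofReal_div] at h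
  rw [Complex.norm_def, Complex.ofReal_inj.mp h]

lemma Gamma_re_div_sqrt_cosh_le_norm_Gamma {z : ℂ} (hz : 1 / 2 ≤ z.re) :
    Real.Gamma z.re / √(Real.cosh (π * z.im)) ≤ ‖Complex.Gamma z‖ := by
  have h := Gamma_mul_norm_Gamma_le z.im one_half_pos hz
  rw [Complex.ofReal_div, Complex.ofReal_one, Complex.ofReal_ofNat, norm_Gamma_one_half_add_mul_I,
    Complex.re_add_im, Real.Gamma_one_half_eq, Real.sqrt_div' _ (Real.cosh_pos _).le,
    mul_div_left_comm, mul_comm] at h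
  exact le_of_mul_le_mul_right h (Real.sqrt_pos.2 Real.pi_pos)

lemma abs_sinh_im_le_norm_sin (z : ℂ) : |Real.sinh z.im| ≤ ‖Complex.sin z‖ := by
  conv_rhs => rw [← Complex.re_add_im z]
  rw [Complex.sin_add_mul_I, ← Complex.ofReal_sin, ← Complex.ofReal_cosh,
    ← Complex.ofReal_cos, ← Complex.ofReal_sinh, ← Complex.ofReal_mul, ← Complex.ofReal_mul,
    Complex.norm_def, Complex.normSq_add_mul_I, ← Real.sqrt_sq_eq_abs]
  refine Real.sqrt_le_sqrt ?_
  nlinarith [Real.sin_sq_add_cos_sq z.re, Real.cosh_sq z.im, sq_nonneg (Real.sin z.re)]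

lemma norm_GammaR (s : ℂ) : ‖GammaR s‖ = π ^ (-s.re / 2) * ‖Complex.Gamma (s / 2)‖ := by
  rw [GammaR, norm_mul, Complex.norm_cpow_eq_rpow_re_of_pos Real.pi_pos]
  simp [neg_div]

lemma inv_Gamma_eq_sin_mul_Gamma_one_sub_div_pi {z : ℂ} (h : Complex.Gamma (1 - z) ≠ 0) :
    (Complex.Gamma z)⁻¹ = Complex.sin (π * z) * Complex.Gamma (1 - z) / π := by
  rw [eq_div_of_mul_eq h (Complex.Gamma_mul_Gamma_one_sub z), inv_div, div_div_eq_mul_div,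
    mul_comm]

lemma gammaRFactor_eq {s : ℂ} (h : Complex.Gamma (1 - s / 2) ≠ 0) :
    gammaRFactor s = π ^ (s.re - 3 / 2) *
      (‖Complex.Gamma ((1 - s) / 2)‖ * ‖Complex.Gamma (1 - s / 2)‖) *
        ‖Complex.sin (π * (s / 2))‖ := by
  have hπ : ‖(π : ℂ)‖ = π ^ (1 : ℝ) := by simp [Real.pi_pos.le]
  have hexp : π ^ (-(1 - s).re / 2) * π ^ (-(-s.re / 2)) / π ^ (1 : ℝ) = π ^ (s.re - 3 / 2) := by
    rw [← Real.rpow_add Real.pi_pos, ← Real.rpow_sub Real.pi_pos]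
    congr 1
    simp only [Complex.sub_re, Complex.one_re]
    ring
  rw [gammaRFactor, norm_div, norm_GammaR, norm_GammaR, div_eq_mul_inv, mul_inv, ← norm_inv,
    inv_Gamma_eq_sin_mul_Gamma_one_sub_div_pi h, norm_div, norm_mul, hπ,
    ← Real.rpow_neg Real.pi_pos.le, ← hexp]
  ring

lemma Gamma_div_two_mul_Gamma_add_one_div_two (x : ℝ) :
    Real.Gamma (x / 2) * Real.Gamma ((x + 1) / 2) = Real.Gamma x * 2 ^ (1 - x) * √π := by
  have h := Real.Gamma_mul_Gamma_add_half (x / 2)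
  rwa [show x / 2 + 1 / 2 = (x + 1) / 2 by ring, mul_div_cancel₀ x two_ne_zero] at h

lemma sqrt_two_mul_two_pi_rpow_div_sqrt_pi (σ : ℝ) :
    √2 * ((2 * π) ^ (σ - 1 / 2) / √π) = π ^ (σ - 3 / 2) * (2 ^ σ * √π) := by
  have h2 : √2 * 2 ^ (σ - 1 / 2) = (2 : ℝ) ^ σ := by
    rw [Real.sqrt_eq_rpow, ← Real.rpow_add two_pos]
    norm_num
  have hπ : π ^ (σ - 1 / 2) = π ^ (σ - 3 / 2) * (√π * √π) := by
    rw [Real.mul_self_sqrt Real.pi_pos.le, ← Real.rpow_add_one Real.pi_ne_zero]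
    ring_nf
  rw [Real.mul_rpow two_pos.le Real.pi_pos.le, hπ, ← h2]
  field_simp

theorem gammaRFactor_lower_bound_general (σ τ : ℝ) (hσ : σ < 0) :
    Real.sqrt 2 * ((2 * Real.pi) ^ (σ - 1/2) / Real.sqrt Real.pi) * Real.Gamma (1 - σ) *
        |Real.tanh (Real.pi * τ / 2)| ≤
      gammaRFactor (σ + τ * Complex.I) := by
  set s : ℂ := σ + τ * I
  set c := Real.cosh (π * (τ / 2))
  have hA : Real.Gamma ((1 - σ) / 2) / √c ≤ ‖Complex.Gamma ((1 - s) / 2)‖ := by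
    simpa [s, c, neg_div, Real.cosh_neg] using
      Gamma_re_div_sqrt_cosh_le_norm_Gamma (z := (1 - s) / 2) (by simp [s]; linarith)
  have hB : Real.Gamma (1 - σ / 2) / √c ≤ ‖Complex.Gamma (1 - s / 2)‖ := by
    simpa [s, c] using
      Gamma_re_div_sqrt_cosh_le_norm_Gamma (z := 1 - s / 2) (by simp [s]; linarith)
  have hS : |Real.sinh (π * (τ / 2))| ≤ ‖Complex.sin (π * (s / 2))‖ := by
    simpa [s] using abs_sinh_im_le_norm_sin (π * (s / 2))
  have hre : s.re = σ := by simp [s]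
  have hΓA := Real.Gamma_pos_of_pos (s := (1 - σ) / 2) (by linarith)
  have hΓB := Real.Gamma_pos_of_pos (s := 1 - σ / 2) (by linarith)
  rw [gammaRFactor_eq (Complex.Gamma_ne_zero_of_re_pos (by simp [s]; linarith)), hre,
    sqrt_two_mul_two_pi_rpow_div_sqrt_pi, mul_div_assoc]
  calc π ^ (σ - 3 / 2) * (2 ^ σ * √π) * Real.Gamma (1 - σ) * |Real.tanh (π * (τ / 2))|
      = π ^ (σ - 3 / 2) * (Real.Gamma ((1 - σ) / 2) / √c * (Real.Gamma (1 - σ / 2) / √c)) *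
          |Real.sinh (π * (τ / 2))| := by
        rw [div_mul_div_comm, Real.mul_self_sqrt (Real.cosh_pos _).le,
          show 1 - σ / 2 = (1 - σ + 1) / 2 by ring, Gamma_div_two_mul_Gamma_add_one_div_two,
          sub_sub_cancel, Real.tanh_eq_sinh_div_cosh, abs_div, abs_of_pos (Real.cosh_pos _)]
        ring
    _ ≤ _ := by gcongr

/-- For `s = σ + iτ` with `σ < 0` and `s` not an integer,
`γ_ℝ(s) ≥ √2 · (2π)^{σ-1/2}/√π · Γ(1-σ) · |tanh(πτ/2)|`. -/
theorem gammaRFactor_lower_bound (σ τ : ℝ) (hσ : σ < 0)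
    (hs : ∀ n : ℤ, (σ + τ * Complex.I : ℂ) ≠ (n : ℂ)) :
    Real.sqrt 2 * ((2 * Real.pi) ^ (σ - 1/2) / Real.sqrt Real.pi) * Real.Gamma (1 - σ) *
        |Real.tanh (Real.pi * τ / 2)| ≤
      gammaRFactor (σ + τ * Complex.I) :=
  gammaRFactor_lower_bound_general σ τ hσ
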